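/- Let H = (V, E) be a 1-Sperner hypergraph with E ≠ ∅ and E ≠ {∅}. Then there exists a vector x : V → ℝ with x(v) ≥ 0 for all v ∈ V such that ∑_{v ∈ e} x(v) = 1 for every hyperedge e ∈ E, and ∑_{v ∈ V} x(v) ≥ 1. -/

import Mathlib

/-!
Induction on the vertex set. Let `f₀` be a largest edge, `e₀` a smallest edge other than `f₀`,
and `z` the vertex of `e₀ \ f₀`; then every edge through `z`, with `z` removed, lies inside every
edge avoiding `z`. Let `W` be the union of the edges through `z` with `z` removed. If `W` is an
edge, it is the only edge avoiding `z`: take a weighting `x` of the edges through `z` with `z`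
removed, divide it by `x(W) ≥ 1` and give `z` the weight `1 - 1 / x(W)`. Otherwise the edges
avoiding `z`, with `W` removed, form a 1-Sperner hypergraph without empty edge on fewer vertices:
extend its weighting by `1` at `z` and `0` on `W`. The total weight is at least that of any edge.
-/

open Finset

/-- A hypergraph with hyperedge set `E` is 1-Sperner if every two distinct
hyperedges `e, f` satisfy `min |e \ f| |f \ e| = 1`. -/
def OneSperner {α : Type*} [DecidableEq α] (E : Finset (Finset α)) : Prop :=
  ∀ e ∈ E, ∀ f ∈ E, e ≠ f → min (e \ f).card (f \ e).card = 1

section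

variable {α : Type*} [DecidableEq α] {E : Finset (Finset α)} {z : α} {W : Finset α}

lemma exists_weighting_of_sdiff (hin : ∀ e ∈ E, z ∈ e → e \ {z} ⊆ W) {x : α → ℝ}
    (hx0 : ∀ v, 0 ≤ x v) (hx : ∀ f ∈ E, z ∉ f → ∑ v ∈ f \ W, x v = 1) :
    ∃ y : α → ℝ, (∀ v, 0 ≤ y v) ∧ ∀ e ∈ E, ∑ v ∈ e, y v = 1 := by
  refine ⟨fun v => if v = z then 1 else if v ∈ W then 0 else x v, fun v => ?_, fun e he => ?_⟩
  · dsimp only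
    split_ifs <;> simp [hx0]
  by_cases hze : z ∈ e
  · rw [sum_eq_single_of_mem z hze fun v hv hvz => ?_, if_pos rfl]
    rw [if_neg hvz, if_pos (hin e he hze (mem_sdiff.2 ⟨hv, notMem_singleton.2 hvz⟩))]
  · rw [← hx e he hze, ← sum_subset sdiff_subset fun v hve hv => ?_]
    · refine sum_congr rfl fun v hv => ?_
      rw [if_neg (ne_of_mem_of_not_mem (sdiff_subset hv) hze), if_neg (mem_sdiff.1 hv).2]
    · rw [if_neg (ne_of_mem_of_not_mem hve hze), if_pos (by simpa [hve] using hv)]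

lemma exists_weighting_of_sdiff_singleton (hzW : z ∉ W) (hin : ∀ e ∈ E, z ∈ e → e \ {z} ⊆ W)
    (hout : ∀ f ∈ E, z ∉ f → f = W) {e₀ : Finset α} (he₀ : e₀ ∈ E) (hze₀ : z ∈ e₀)
    {x : α → ℝ} (hx0 : ∀ v, 0 ≤ x v) (hx : ∀ e ∈ E, z ∈ e → ∑ v ∈ e \ {z}, x v = 1) :
    ∃ y : α → ℝ, (∀ v, 0 ≤ y v) ∧ ∀ e ∈ E, ∑ v ∈ e, y v = 1 := by
  set T := ∑ v ∈ W, x v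
  have hT : 1 ≤ T :=
    hx e₀ he₀ hze₀ ▸ sum_le_sum_of_subset_of_nonneg (hin e₀ he₀ hze₀) fun v _ _ => hx0 v
  have hT0 : 0 < T := by linarith
  refine ⟨fun v => if v = z then 1 - T⁻¹ else x v / T, fun v => ?_, fun e he => ?_⟩
  · dsimp only
    split_ifs
    · linarith [inv_le_one_of_one_le₀ hT]
    · exact div_nonneg (hx0 v) hT0.le
  by_cases hze : z ∈ e
  · rw [← add_sum_erase e _ hze, if_pos rfl, ← sdiff_singleton_eq_erase,
      sum_congr rfl fun v hv => if_neg (notMem_singleton.1 (mem_sdiff.1 hv).2), ← sum_div,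
      hx e he hze, div_eq_mul_inv, one_mul, sub_add_cancel]
  · rw [hout e he hze, sum_congr rfl fun v hv => if_neg (ne_of_mem_of_not_mem hv hzW), ← sum_div,
      div_self hT0.ne']

lemma eq_of_card_sdiff_le_one {s t : Finset α} (hst : #(s \ t) ≤ 1) {a b : α} (ha : a ∈ s)
    (ha' : a ∉ t) (hb : b ∈ s) (hb' : b ∉ t) : a = b :=
  card_le_one.1 hst _ (mem_sdiff.2 ⟨ha, ha'⟩) _ (mem_sdiff.2 ⟨hb, hb'⟩)

end

namespace OneSperner

variable {α : Type*} [DecidableEq α] {E : Finset (Finset α)}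

lemma mono {F : Finset (Finset α)} (h : OneSperner E) (hFE : F ⊆ E) : OneSperner F :=
  fun e he f hf => h e (hFE he) f (hFE hf)

lemma image_sdiff (h : OneSperner E) {W : Finset α} (hW : ∀ e ∈ E, W ⊆ e) :
    OneSperner (E.image (· \ W)) := by
  simp only [OneSperner, mem_image]
  rintro _ ⟨e, he, rfl⟩ _ ⟨f, hf, rfl⟩ hne
  rw [sdiff_sdiff_sdiff_cancel_right (hW f hf), sdiff_sdiff_sdiff_cancel_right (hW e he)]
  exact h e he f hf (by rintro rfl; exact hne rfl)

lemma sdiff_nonempty (h : OneSperner E) {e f : Finset α} (he : e ∈ E) (hf : f ∈ E)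
    (hne : e ≠ f) : (e \ f).Nonempty := by
  rw [← card_pos]
  have := h e he f hf hne
  omega

lemma card_sdiff_le_one (h : OneSperner E) {e f : Finset α} (he : e ∈ E) (hf : f ∈ E)
    (hcard : #e ≤ #f) : #(e \ f) ≤ 1 := by
  obtain rfl | hne := eq_or_ne e f
  · simp
  have := h e he f hf hne
  have := card_sdiff_le_card_sdiff_iff.2 hcard
  omega

lemma empty_notMem (h : OneSperner E) (hE : E ≠ {∅}) : ∅ ∉ E := by
  intro hemp
  refine hE (eq_singleton_iff_unique_mem.2 ⟨hemp, fun f hf => ?_⟩)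
  by_contra hne
  simpa using h.sdiff_nonempty hemp hf (Ne.symm hne)

lemma sdiff_singleton_subset_of_extremal (h : OneSperner E) {e₀ f₀ : Finset α}
    (hf₀ : f₀ ∈ E) (hmax : ∀ g ∈ E, #g ≤ #f₀) (he₀ : e₀ ∈ E)
    (hmin : ∀ g ∈ E, g ≠ f₀ → #e₀ ≤ #g) {z : α} (hze₀ : z ∈ e₀) (hzf₀ : z ∉ f₀)
    {e f : Finset α} (he : e ∈ E) (hze : z ∈ e) (hf : f ∈ E) (hzf : z ∉ f) :
    e \ {z} ⊆ f := by
  have off_f₀ : ∀ g ∈ E, z ∈ g → ∀ w ∈ g, w ∉ f₀ → w = z := fun g hg hzg w hwg hwf₀ =>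
    eq_of_card_sdiff_le_one (h.card_sdiff_le_one hg hf₀ (hmax g hg)) hwg hwf₀ hzg hzf₀
  have e₀_off : ∀ g ∈ E, g ≠ f₀ → z ∉ g → ∀ w ∈ e₀, w ∉ g → w = z :=
    fun g hg hgf₀ hzg w hwe₀ hwg =>
      eq_of_card_sdiff_le_one (h.card_sdiff_le_one he₀ hg (hmin g hg hgf₀)) hwe₀ hwg hze₀ hzg
  intro w hw
  obtain ⟨hwe, hwz⟩ := mem_sdiff.1 hw
  rw [mem_singleton] at hwz
  by_contra hwf
  obtain rfl | hff₀ := eq_or_ne f f₀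
  · exact hwz (off_f₀ e he hze w hwe hwf)
  obtain rfl | hee₀ := eq_or_ne e e₀
  · exact hwz (e₀_off f hf hff₀ hzf w hwe hwf)
  have hfe : #(f \ e) ≤ 1 := by
    have h2 : 1 < #(e \ f) :=
      one_lt_card.2 ⟨w, mem_sdiff.2 ⟨hwe, hwf⟩, z, mem_sdiff.2 ⟨hze, hzf⟩, hwz⟩
    have := h e he f hf (by rintro rfl; exact hzf hze)
    omega
  obtain ⟨a, ha⟩ := h.sdiff_nonempty he₀ he hee₀.symm
  obtain ⟨hae₀, hae⟩ := mem_sdiff.1 ha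
  have haz : a ≠ z := by rintro rfl; exact hae hze
  have haf : a ∈ f := by
    by_contra haf
    exact haz (e₀_off f hf hff₀ hzf a hae₀ haf)
  obtain ⟨y, hy⟩ := h.sdiff_nonempty hf hf₀ hff₀
  obtain ⟨hyf, hyf₀⟩ := mem_sdiff.1 hy
  have hye : y ∈ e := by
    by_contra hye
    obtain rfl := eq_of_card_sdiff_le_one hfe hyf hye haf hae
    exact haz (off_f₀ e₀ he₀ hze₀ y hae₀ hyf₀)
  exact hzf (off_f₀ e he hze y hye hyf₀ ▸ hyf)

lemma exists_separating_vertex (h : OneSperner E) {e : Finset α} (he : e ∈ E)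
    (hne : e.Nonempty) :
    ∃ z, (∃ e ∈ E, z ∈ e) ∧ ∀ e ∈ E, z ∈ e → ∀ f ∈ E, z ∉ f → e \ {z} ⊆ f := by
  by_cases hE : E.Nontrivial
  · obtain ⟨f₀, hf₀, hmax⟩ := E.exists_max_image card ⟨e, he⟩
    obtain ⟨e₀, he₀, hmin⟩ := (E.erase f₀).exists_min_image card hE.erase_nonempty
    obtain ⟨he₀f₀, he₀⟩ := mem_erase.1 he₀
    obtain ⟨z, hz⟩ := h.sdiff_nonempty he₀ hf₀ he₀f₀
    obtain ⟨hze₀, hzf₀⟩ := mem_sdiff.1 hz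
    exact ⟨z, ⟨e₀, he₀, hze₀⟩, fun e he hze f hf hzf =>
      h.sdiff_singleton_subset_of_extremal hf₀ hmax he₀
        (fun g hg hgf₀ => hmin g (mem_erase.2 ⟨hgf₀, hg⟩)) hze₀ hzf₀ he hze hf hzf⟩
  · obtain ⟨z, hz⟩ := hne
    refine ⟨z, ⟨e, he, hz⟩, fun e he hze f hf hzf => absurd ?_ hE⟩
    exact ⟨e, he, f, hf, by rintro rfl; exact hzf hze⟩

lemma exists_weighting_of_separating_vertex (h : OneSperner E) (hemp : ∅ ∉ E) {z : α}
    {e₀ : Finset α} (he₀ : e₀ ∈ E) (hze₀ : z ∈ e₀)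
    (hsep : ∀ e ∈ E, z ∈ e → ∀ f ∈ E, z ∉ f → e \ {z} ⊆ f)
    (ih : ∀ F : Finset (Finset α), (∀ f ∈ F, z ∉ f ∧ ∃ e ∈ E, f ⊆ e) → OneSperner F →
      ∅ ∉ F → ∃ x : α → ℝ, (∀ v, 0 ≤ x v) ∧ ∀ f ∈ F, ∑ v ∈ f, x v = 1) :
    ∃ x : α → ℝ, (∀ v, 0 ≤ x v) ∧ ∀ e ∈ E, ∑ v ∈ e, x v = 1 := by
  set E₁ := (E.filter (z ∈ ·)).image (· \ {z})
  set W := E₁.sup id with hW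
  have hin : ∀ e ∈ E, z ∈ e → e \ {z} ⊆ W := fun e he hze =>
    le_sup (f := id) (mem_image_of_mem _ (mem_filter.2 ⟨he, hze⟩))
  have hout : ∀ f ∈ E, z ∉ f → W ⊆ f := fun f hf hzf => Finset.sup_le <| forall_mem_image.2
    fun e he => hsep e (mem_filter.1 he).1 (mem_filter.1 he).2 f hf hzf
  by_cases hWE : W ∈ E
  · have hzW : z ∉ W := by simp [hW, E₁]
    have huniq : ∀ f ∈ E, z ∉ f → f = W := fun f hf hzf => by
      by_contra hfW
      simpa [sdiff_eq_empty_iff_subset.2 (hout f hf hzf)] using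
        h.sdiff_nonempty hWE hf (Ne.symm hfW)
    have hS₁ : OneSperner E₁ := (h.mono (filter_subset _ _)).image_sdiff
      fun e he => singleton_subset_iff.2 (mem_filter.1 he).2
    obtain ⟨x, hx0, hx⟩ := ih E₁
      (forall_mem_image.2 fun e he => ⟨by simp, e, (mem_filter.1 he).1, sdiff_subset⟩)
      hS₁ (hS₁.empty_notMem fun h₁ => hemp (by simpa [hW, h₁] using hWE))
    exact exists_weighting_of_sdiff_singleton hzW hin huniq he₀ hze₀ hx0
      fun e he hze => hx _ (mem_image_of_mem _ (mem_filter.2 ⟨he, hze⟩))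
  · obtain ⟨x, hx0, hx⟩ := ih ((E.filter (z ∉ ·)).image (· \ W))
      (forall_mem_image.2 fun f hf =>
        ⟨fun hz => (mem_filter.1 hf).2 (mem_sdiff.1 hz).1, f, (mem_filter.1 hf).1, sdiff_subset⟩)
      ((h.mono (filter_subset _ _)).image_sdiff
        fun f hf => hout f (mem_filter.1 hf).1 (mem_filter.1 hf).2)
      (by
        simp only [mem_image, mem_filter, sdiff_eq_empty_iff_subset, not_exists, not_and]
        exact fun f ⟨hf, hzf⟩ hfW => hWE (subset_antisymm hfW (hout f hf hzf) ▸ hf))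
    exact exists_weighting_of_sdiff hin hx0
      fun f hf hzf => hx _ (mem_image_of_mem _ (mem_filter.2 ⟨hf, hzf⟩))

theorem exists_weighting (h : OneSperner E) (hemp : ∅ ∉ E) :
    ∃ x : α → ℝ, (∀ v, 0 ≤ x v) ∧ ∀ e ∈ E, ∑ v ∈ e, x v = 1 := by
  suffices key : ∀ V : Finset α, ∀ E : Finset (Finset α), (∀ e ∈ E, e ⊆ V) → OneSperner E →
      ∅ ∉ E → ∃ x : α → ℝ, (∀ v, 0 ≤ x v) ∧ ∀ e ∈ E, ∑ v ∈ e, x v = 1 from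
    key _ E (fun e he => le_sup (f := id) he) h hemp
  intro V
  induction V using Finset.strongInduction with
  | H V ih =>
  intro E hEV h hemp
  obtain rfl | ⟨e, he⟩ := E.eq_empty_or_nonempty
  · exact ⟨0, fun _ => le_rfl, by simp⟩
  obtain ⟨z, ⟨e₀, he₀, hze₀⟩, hsep⟩ :=
    h.exists_separating_vertex he (nonempty_iff_ne_empty.2 (ne_of_mem_of_not_mem he hemp))
  have hV : V \ {z} ⊂ V :=
    sdiff_ssubset (singleton_subset_iff.2 (hEV e₀ he₀ hze₀)) (singleton_nonempty z)
  refine h.exists_weighting_of_separating_vertex hemp he₀ hze₀ hsep fun F hF => ih _ hV F ?_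
  intro f hf
  obtain ⟨hzf, e, he, hfe⟩ := hF f hf
  exact subset_sdiff.2 ⟨hfe.trans (hEV e he), disjoint_singleton_right.2 hzf⟩

end OneSperner

theorem stmt_10 {α : Type*} [DecidableEq α] (V : Finset α) (E : Finset (Finset α))
    (hE : ∀ e ∈ E, e ⊆ V) (h : OneSperner E)
    (hne : E ≠ ∅) (hne' : E ≠ ({∅} : Finset (Finset α))) :
    ∃ x : α → ℝ, (∀ v ∈ V, 0 ≤ x v) ∧ (∀ e ∈ E, ∑ v ∈ e, x v = 1) ∧
      1 ≤ ∑ v ∈ V, x v := by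
  obtain ⟨x, hx0, hx⟩ := h.exists_weighting (h.empty_notMem hne')
  obtain ⟨e, he⟩ := nonempty_iff_ne_empty.2 hne
  refine ⟨x, fun v _ => hx0 v, hx, ?_⟩
  calc 1 = ∑ v ∈ e, x v := (hx e he).symm
    _ ≤ ∑ v ∈ V, x v := sum_le_sum_of_subset_of_nonneg (hE e he) fun v _ _ => hx0 v
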